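/- arXiv:2103.03801 — 2 statements merged into one kernel-verified Lean document; each statement's English description precedes it below -/
import Mathlib

section
/- Let Φ be an n×d real matrix with order-(|l|+|s|) RIP constant δ < 1, and let l, s be disjoint index sets. Then for all vectors a ∈ R^{|l|} and b ∈ R^{|s|}, |aᵀ Φ_lᵀ Φ_s b| ≤ δ ‖a‖₂ ‖b‖₂. -/
open Matrix Finset

noncomputable section

/-- Number of nonzero entries of a vector. -/
def sparsity {d : ℕ} (x : Fin d → ℝ) : ℕ :=
  (Finset.univ.filter fun i => x i ≠ 0).card

/-- Squared Euclidean norm. -/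
def nsq {k : Type*} [Fintype k] (v : k → ℝ) : ℝ := ∑ i, v i ^ 2

/-- Euclidean (ℓ₂) norm. -/
def l2 {k : Type*} [Fintype k] (v : k → ℝ) : ℝ := Real.sqrt (nsq v)

/-- `Φ` satisfies the order-`t` restricted isometry property with constant `δ`. -/
def satRIP {n d : ℕ} (Φ : Matrix (Fin n) (Fin d) ℝ) (t : ℕ) (δ : ℝ) : Prop :=
  ∀ x : Fin d → ℝ, sparsity x ≤ t →
    (1 - δ) * nsq x ≤ nsq (Φ.mulVec x) ∧ nsq (Φ.mulVec x) ≤ (1 + δ) * nsq x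

/-- The order-`t` RIP constant of `Φ` : the smallest `δ ≥ 0` satisfying the RIP bounds. -/
def ripConst {n d : ℕ} (Φ : Matrix (Fin n) (Fin d) ℝ) (t : ℕ) : ℝ :=
  sInf {δ : ℝ | 0 ≤ δ ∧ satRIP Φ t δ}

/-- The submatrix of `Φ` consisting of the columns indexed by `s`. -/
def cols {n d : ℕ} (Φ : Matrix (Fin n) (Fin d) ℝ) (s : Finset (Fin d)) :
    Matrix (Fin n) {i // i ∈ s} ℝ := Φ.submatrix id (fun i => (i : Fin d))

/-- Orthogonal projection `P{Φ_s} = Φ_s (Φ_sᵀ Φ_s)⁻¹ Φ_sᵀ` onto the column span of `Φ_s`. -/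
def proj {n d : ℕ} (Φ : Matrix (Fin n) (Fin d) ℝ) (s : Finset (Fin d)) :
    Matrix (Fin n) (Fin n) ℝ :=
  cols Φ s * ((cols Φ s)ᵀ * cols Φ s)⁻¹ * (cols Φ s)ᵀ

/-- Least-squares residual `v^{⊥s} = (I - P{Φ_s}) v`. -/
def residVec {n d : ℕ} (Φ : Matrix (Fin n) (Fin d) ℝ) (s : Finset (Fin d)) (y : Fin n → ℝ) :
    Fin n → ℝ := y - (proj Φ s).mulVec y

/-- The `i`-th column of `Φ`. -/
def col {n d : ℕ} (Φ : Matrix (Fin n) (Fin d) ℝ) (i : Fin d) : Fin n → ℝ := fun k => Φ k i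

/-- `x` is a least-squares estimate of `y` supported on `s`:
it is supported on `s` and minimizes `‖y - Φ z‖₂` over all `z` supported on `s`. -/
def leastSq {n d : ℕ} (Φ : Matrix (Fin n) (Fin d) ℝ) (y : Fin n → ℝ) (s : Finset (Fin d))
    (x : Fin d → ℝ) : Prop :=
  (∀ i, i ∉ s → x i = 0) ∧
  ∀ z : Fin d → ℝ, (∀ i, i ∉ s → z i = 0) → nsq (y - Φ.mulVec x) ≤ nsq (y - Φ.mulVec z)

/-- The support of a vector, as a `Finset`. -/
def spt {d : ℕ} (x : Fin d → ℝ) : Finset (Fin d) :=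
  Finset.univ.filter fun i => x i ≠ 0

namespace Stmt0Aux

lemma nsq_nonneg {k : Type*} [Fintype k] (v : k → ℝ) : 0 ≤ nsq v :=
  Finset.sum_nonneg fun _ _ => sq_nonneg _

lemma nsq_eq_zero {k : Type*} [Fintype k] {v : k → ℝ} (h : nsq v = 0) : v = 0 := by
  funext i
  have := (Finset.sum_eq_zero_iff_of_nonneg (fun i _ => sq_nonneg (v i))).mp h i (Finset.mem_univ i)
  exact pow_eq_zero_iff (by norm_num) |>.mp this

lemma nsq_zero {k : Type*} [Fintype k] : nsq (0 : k → ℝ) = 0 := by simp [nsq]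

lemma ripSet_nonempty {n d : ℕ} (Φ : Matrix (Fin n) (Fin d) ℝ) (t : ℕ) :
    {δ : ℝ | 0 ≤ δ ∧ satRIP Φ t δ}.Nonempty := by
  set C : ℝ := ∑ k, ∑ i, Φ k i ^ 2 with hC
  have hC0 : 0 ≤ C := Finset.sum_nonneg fun _ _ => Finset.sum_nonneg fun _ _ => sq_nonneg _
  refine ⟨1 + C, ⟨by linarith, fun x _ => ?_⟩⟩
  constructor
  · have : (1 - (1 + C)) * nsq x ≤ 0 := mul_nonpos_of_nonpos_of_nonneg (by linarith) (nsq_nonneg x)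
    exact this.trans (nsq_nonneg _)
  · have h1 : nsq (Φ.mulVec x) ≤ C * nsq x := by
      rw [nsq, hC, Finset.sum_mul]
      refine Finset.sum_le_sum fun k _ => ?_
      have := Finset.sum_mul_sq_le_sq_mul_sq Finset.univ (fun i => Φ k i) x
      simpa [Matrix.mulVec, dotProduct, nsq] using this
    nlinarith [nsq_nonneg x]

lemma ripConst_nonneg {n d : ℕ} (Φ : Matrix (Fin n) (Fin d) ℝ) (t : ℕ) :
    0 ≤ ripConst Φ t :=
  le_csInf (ripSet_nonempty Φ t) fun _ h => h.1

lemma ripSet_bddBelow {n d : ℕ} (Φ : Matrix (Fin n) (Fin d) ℝ) (t : ℕ) :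
    BddBelow {δ : ℝ | 0 ≤ δ ∧ satRIP Φ t δ} := ⟨0, fun _ h => h.1⟩

lemma satRIP_ripConst {n d : ℕ} (Φ : Matrix (Fin n) (Fin d) ℝ) (t : ℕ) :
    satRIP Φ t (ripConst Φ t) := by
  intro x hx
  set δ := ripConst Φ t with hδ
  by_cases hc : nsq x = 0
  · have hx0 : x = 0 := nsq_eq_zero hc
    simp [hx0, hc, Matrix.mulVec_zero, nsq_zero]
  · have hcpos : 0 < nsq x := lt_of_le_of_ne (nsq_nonneg x) (Ne.symm hc)
    constructor
    · by_contra hcon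
      push_neg at hcon
      have hlb : 1 - nsq (Φ.mulVec x) / nsq x ≤ δ := by
        refine le_csInf (ripSet_nonempty Φ t) fun δ' hδ' => ?_
        have h1 := (hδ'.2 x hx).1
        have h2 : 1 - δ' ≤ nsq (Φ.mulVec x) / nsq x := by
          rw [le_div_iff₀ hcpos]; linarith
        linarith
      have : δ < 1 - nsq (Φ.mulVec x) / nsq x := by
        have h2 : nsq (Φ.mulVec x) / nsq x < 1 - δ := by
          rw [div_lt_iff₀ hcpos]; linarith
        linarith
      linarith
    · by_contra hcon
      push_neg at hcon
      have hlb : nsq (Φ.mulVec x) / nsq x - 1 ≤ δ := by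
        refine le_csInf (ripSet_nonempty Φ t) fun δ' hδ' => ?_
        have h1 := (hδ'.2 x hx).2
        have h2 : nsq (Φ.mulVec x) / nsq x ≤ 1 + δ' := by
          rw [div_le_iff₀ hcpos]; linarith
        linarith
      have : δ < nsq (Φ.mulVec x) / nsq x - 1 := by
        have h2 : 1 + δ < nsq (Φ.mulVec x) / nsq x := by
          rw [lt_div_iff₀ hcpos]; linarith
        linarith
      linarith

def ext {d : ℕ} (l : Finset (Fin d)) (a : {i // i ∈ l} → ℝ) : Fin d → ℝ :=
  fun i => if h : i ∈ l then a ⟨i, h⟩ else 0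

lemma ext_mem {d : ℕ} (l : Finset (Fin d)) (a : {i // i ∈ l} → ℝ) (i : {i // i ∈ l}) :
    ext l a i = a i := by simp [ext, i.2]

lemma ext_not_mem {d : ℕ} (l : Finset (Fin d)) (a : {i // i ∈ l} → ℝ) {i : Fin d}
    (h : i ∉ l) : ext l a i = 0 := by simp [ext, h]

lemma mulVec_ext {n d : ℕ} (Φ : Matrix (Fin n) (Fin d) ℝ) (l : Finset (Fin d))
    (a : {i // i ∈ l} → ℝ) : Φ.mulVec (ext l a) = (cols Φ l).mulVec a := by
  funext k
  simp only [Matrix.mulVec, dotProduct, cols, Matrix.submatrix_apply, id]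
  calc ∑ i : Fin d, Φ k i * ext l a i
      = ∑ i ∈ l, Φ k i * ext l a i :=
        (Finset.sum_subset (Finset.subset_univ l) fun i _ hi => by
          rw [ext_not_mem l a hi, mul_zero]).symm
    _ = ∑ i ∈ l.attach, Φ k ↑i * ext l a ↑i :=
        (Finset.sum_attach l fun i => Φ k i * ext l a i).symm
    _ = ∑ i : {i // i ∈ l}, Φ k ↑i * a i := by
        rw [← Finset.univ_eq_attach]
        exact Finset.sum_congr rfl fun i _ => by rw [ext_mem]

lemma nsq_ext {d : ℕ} (l : Finset (Fin d)) (a : {i // i ∈ l} → ℝ) :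
    nsq (ext l a) = nsq a := by
  unfold nsq
  calc ∑ i : Fin d, ext l a i ^ 2
      = ∑ i ∈ l, ext l a i ^ 2 :=
        (Finset.sum_subset (Finset.subset_univ l) fun i _ hi => by
          rw [ext_not_mem l a hi]; ring).symm
    _ = ∑ i ∈ l.attach, ext l a ↑i ^ 2 := (Finset.sum_attach l fun i => ext l a i ^ 2).symm
    _ = ∑ i : {i // i ∈ l}, a i ^ 2 := by
        rw [← Finset.univ_eq_attach]
        exact Finset.sum_congr rfl fun i _ => by rw [ext_mem]

lemma sparsity_ext_add {d : ℕ} {l s : Finset (Fin d)} (a : {i // i ∈ l} → ℝ)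
    (b : {i // i ∈ s} → ℝ) : sparsity (ext l a + ext s b) ≤ l.card + s.card := by
  refine le_trans (le_trans (Finset.card_le_card ?_) (Finset.card_union_le l s)) le_rfl
  intro i hi
  simp only [Finset.mem_filter, Finset.mem_univ, true_and, Pi.add_apply] at hi
  by_contra hmem
  simp only [Finset.mem_union, not_or] at hmem
  exact hi (by rw [ext_not_mem l a hmem.1, ext_not_mem s b hmem.2, add_zero])

lemma nsq_ext_add {d : ℕ} {l s : Finset (Fin d)} (hdisj : Disjoint l s)
    (a : {i // i ∈ l} → ℝ) (b : {i // i ∈ s} → ℝ) :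
    nsq (ext l a + ext s b) = nsq a + nsq b := by
  have key : ∀ i, (ext l a i + ext s b i) ^ 2 = ext l a i ^ 2 + ext s b i ^ 2 := by
    intro i
    have : ext l a i * ext s b i = 0 := by
      by_cases h : i ∈ l
      · rw [ext_not_mem s b (Finset.disjoint_left.mp hdisj h), mul_zero]
      · rw [ext_not_mem l a h, zero_mul]
    nlinarith [this]
  calc nsq (ext l a + ext s b) = ∑ i, (ext l a i ^ 2 + ext s b i ^ 2) := by
        unfold nsq; exact Finset.sum_congr rfl fun i _ => key i
    _ = nsq (ext l a) + nsq (ext s b) := by rw [Finset.sum_add_distrib]; rfl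
    _ = nsq a + nsq b := by rw [nsq_ext, nsq_ext]

lemma ext_neg {d : ℕ} (s : Finset (Fin d)) (b : {i // i ∈ s} → ℝ) :
    ext s (-b) = -(ext s b) := by
  funext i; by_cases h : i ∈ s <;> simp [ext, h]

lemma nsq_neg {k : Type*} [Fintype k] (v : k → ℝ) : nsq (-v) = nsq v := by simp [nsq]

lemma polarization {k : Type*} [Fintype k] (u w : k → ℝ) :
    4 * (u ⬝ᵥ w) = nsq (u + w) - nsq (u - w) := by
  simp only [nsq, dotProduct, Pi.add_apply, Pi.sub_apply, Finset.mul_sum,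
    ← Finset.sum_sub_distrib]
  exact Finset.sum_congr rfl fun i _ => by ring

end Stmt0Aux

/-- for disjoint index sets `l, s` and RIP constant `δ_{|l|+|s|} < 1`,
`|aᵀ Φ_lᵀ Φ_s b| ≤ δ ‖a‖₂ ‖b‖₂`. -/
theorem stmt0 {n d : ℕ} (Φ : Matrix (Fin n) (Fin d) ℝ) (l s : Finset (Fin d))
    (hdisj : Disjoint l s) (hδ : ripConst Φ (l.card + s.card) < 1)
    (a : {i // i ∈ l} → ℝ) (b : {i // i ∈ s} → ℝ) :
    |a ⬝ᵥ ((cols Φ l)ᵀ * cols Φ s).mulVec b| ≤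
      ripConst Φ (l.card + s.card) * l2 a * l2 b := by
  open Stmt0Aux in
  set δ := ripConst Φ (l.card + s.card) with hδdef
  have hδ0 : 0 ≤ δ := Stmt0Aux.ripConst_nonneg Φ _
  have hrip := Stmt0Aux.satRIP_ripConst Φ (l.card + s.card)
  have hbil : ∀ (a : {i // i ∈ l} → ℝ) (b : {i // i ∈ s} → ℝ),
      a ⬝ᵥ ((cols Φ l)ᵀ * cols Φ s).mulVec b
        = (Φ.mulVec (Stmt0Aux.ext l a)) ⬝ᵥ (Φ.mulVec (Stmt0Aux.ext s b)) := by
    intro a b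
    rw [← Matrix.mulVec_mulVec, Matrix.dotProduct_mulVec, Matrix.vecMul_transpose,
      Stmt0Aux.mulVec_ext, Stmt0Aux.mulVec_ext]
  have hupper : ∀ (a : {i // i ∈ l} → ℝ) (b : {i // i ∈ s} → ℝ),
      a ⬝ᵥ ((cols Φ l)ᵀ * cols Φ s).mulVec b ≤ δ * (nsq a + nsq b) / 2 := by
    intro a b
    rw [hbil]
    have hadd : Φ.mulVec (Stmt0Aux.ext l a) + Φ.mulVec (Stmt0Aux.ext s b)
        = Φ.mulVec (Stmt0Aux.ext l a + Stmt0Aux.ext s b) := (Matrix.mulVec_add Φ _ _).symm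
    have hsub : Φ.mulVec (Stmt0Aux.ext l a) - Φ.mulVec (Stmt0Aux.ext s b)
        = Φ.mulVec (Stmt0Aux.ext l a + Stmt0Aux.ext s (-b)) := by
      rw [Stmt0Aux.ext_neg, Matrix.mulVec_add, Matrix.mulVec_neg]
      abel
    have h1 := (hrip _ (Stmt0Aux.sparsity_ext_add a b)).2
    have h2 := (hrip _ (Stmt0Aux.sparsity_ext_add a (-b))).1
    rw [Stmt0Aux.nsq_ext_add hdisj, ← hδdef] at h1
    rw [Stmt0Aux.nsq_ext_add hdisj, Stmt0Aux.nsq_neg, ← hδdef] at h2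
    rw [← hadd] at h1
    rw [← hsub] at h2
    have hpol := Stmt0Aux.polarization (Φ.mulVec (Stmt0Aux.ext l a))
      (Φ.mulVec (Stmt0Aux.ext s b))
    linarith
  have habs : ∀ (a : {i // i ∈ l} → ℝ) (b : {i // i ∈ s} → ℝ),
      |a ⬝ᵥ ((cols Φ l)ᵀ * cols Φ s).mulVec b| ≤ δ * (nsq a + nsq b) / 2 := by
    intro a b
    refine abs_le.mpr ⟨?_, hupper a b⟩
    have h := hupper a (-b)
    rw [Matrix.mulVec_neg, dotProduct_neg, Stmt0Aux.nsq_neg] at h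
    linarith
  by_cases ha : nsq a = 0
  · have : a = 0 := Stmt0Aux.nsq_eq_zero ha
    simp [this, zero_dotProduct, l2, ha, abs_nonneg]
    positivity
  by_cases hb : nsq b = 0
  · have : b = 0 := Stmt0Aux.nsq_eq_zero hb
    simp [this, Matrix.mulVec_zero, dotProduct_zero, l2, hb]
    positivity
  have hna : 0 < nsq a := lt_of_le_of_ne (Stmt0Aux.nsq_nonneg a) (Ne.symm ha)
  have hnb : 0 < nsq b := lt_of_le_of_ne (Stmt0Aux.nsq_nonneg b) (Ne.symm hb)
  have hla : 0 < l2 a := Real.sqrt_pos.mpr hna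
  have hlb : 0 < l2 b := Real.sqrt_pos.mpr hnb
  have hsqa : l2 a ^ 2 = nsq a := Real.sq_sqrt (Stmt0Aux.nsq_nonneg a)
  have hsqb : l2 b ^ 2 = nsq b := Real.sq_sqrt (Stmt0Aux.nsq_nonneg b)
  have hnsq_smul : ∀ (c : ℝ), nsq (c • a) = c ^ 2 * nsq a := by
    intro c
    simp only [nsq, Pi.smul_apply, smul_eq_mul, mul_pow, ← Finset.mul_sum]
  have hnsq_smul' : ∀ (c : ℝ), nsq (c • b) = c ^ 2 * nsq b := by
    intro c
    simp only [nsq, Pi.smul_apply, smul_eq_mul, mul_pow, ← Finset.mul_sum]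
  have key := habs ((l2 a)⁻¹ • a) ((l2 b)⁻¹ • b)
  rw [hnsq_smul, hnsq_smul', inv_pow, inv_pow, hsqa, hsqb,
    inv_mul_cancel₀ (ne_of_gt hna), inv_mul_cancel₀ (ne_of_gt hnb)] at key
  have hlin : ((l2 a)⁻¹ • a) ⬝ᵥ ((cols Φ l)ᵀ * cols Φ s).mulVec ((l2 b)⁻¹ • b)
      = (l2 a)⁻¹ * ((l2 b)⁻¹ * (a ⬝ᵥ ((cols Φ l)ᵀ * cols Φ s).mulVec b)) := by
    rw [Matrix.mulVec_smul, smul_dotProduct, dotProduct_smul]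
    simp [smul_eq_mul]
  rw [hlin] at key
  rw [abs_mul, abs_mul, abs_inv, abs_inv, abs_of_pos hla, abs_of_pos hlb] at key
  have : δ * (1 + 1) / 2 = δ := by ring
  rw [this] at key
  calc |a ⬝ᵥ ((cols Φ l)ᵀ * cols Φ s).mulVec b|
      = l2 a * l2 b * ((l2 a)⁻¹ * ((l2 b)⁻¹ * |a ⬝ᵥ ((cols Φ l)ᵀ * cols Φ s).mulVec b|)) := by
        field_simp
    _ ≤ l2 a * l2 b * δ := by
        apply mul_le_mul_of_nonneg_left key (by positivity)
    _ = δ * l2 a * l2 b := by ring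
end
end

section
/- Let Φ be an n×d real matrix with order-(|l|+|s|) RIP constant δ < 1, and let l, s be disjoint index sets. Then for all b ∈ R^{|s|}, ‖Φ_lᵀ Φ_s b‖₂ ≤ δ ‖b‖₂. -/
open Matrix Finset

noncomputable section

/-!
Write `a = Φ_lᵀ Φ_s b`. Extending `a` and `b` by zero to vectors `x`, `y` on all columns, the
supports of `x` and `y` are disjoint and have total size `|l| + |s|`, and
`‖a‖² = ⟪Φ_l a, Φ_s b⟫ = ⟪Φx, Φy⟫`. For orthogonal `x`, `y` with `|supp x| + |supp y| ≤ t`, the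
RIP bounds on `x ± y` and polarization give `⟪Φx, Φy⟫ ≤ δ_t ‖x‖ ‖y‖`, whence `‖a‖ ≤ δ ‖b‖`.
The infimum `δ_t` itself satisfies the RIP bounds because they cut out a closed set of `δ`s.
-/

section Norms

variable {ι : Type*} [Fintype ι]

lemma nsq_eq_dotProduct (v : ι → ℝ) : nsq v = v ⬝ᵥ v := by
  simp only [nsq, dotProduct, sq]

lemma nsq_nonneg (v : ι → ℝ) : 0 ≤ nsq v :=
  sum_nonneg fun i _ => sq_nonneg (v i)

lemma nsq_eq_zero {v : ι → ℝ} : nsq v = 0 ↔ v = 0 := by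
  rw [nsq_eq_dotProduct, dotProduct_self_eq_zero]

lemma nsq_smul (c : ℝ) (v : ι → ℝ) : nsq (c • v) = c ^ 2 * nsq v := by
  simp only [nsq, mul_sum, Pi.smul_apply, smul_eq_mul, mul_pow]

lemma l2_nonneg (v : ι → ℝ) : 0 ≤ l2 v := Real.sqrt_nonneg _

lemma sq_l2 (v : ι → ℝ) : l2 v ^ 2 = nsq v := Real.sq_sqrt (nsq_nonneg v)

lemma l2_pos {v : ι → ℝ} (hv : v ≠ 0) : 0 < l2 v :=
  Real.sqrt_pos.2 ((nsq_nonneg v).lt_of_ne' (nsq_eq_zero.not.2 hv))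

lemma nsq_mulVec_le {κ : Type*} [Fintype κ] (A : Matrix κ ι ℝ) (x : ι → ℝ) :
    nsq (A *ᵥ x) ≤ (∑ i, ∑ j, A i j ^ 2) * nsq x := by
  rw [sum_mul]
  exact sum_le_sum fun i _ => by
    simpa [mulVec, dotProduct, nsq] using sum_mul_sq_le_sq_mul_sq univ (fun j => A i j) x

end Norms

section Sparsity

variable {d : ℕ}

lemma sparsity_le_add_of_ne_zero {x y z : Fin d → ℝ} (h : ∀ i, z i ≠ 0 → x i ≠ 0 ∨ y i ≠ 0) :
    sparsity z ≤ sparsity x + sparsity y :=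
  (card_le_card fun i hi => by simpa using h i (by simpa using hi)).trans (card_union_le _ _)

lemma sparsity_add_le (x y : Fin d → ℝ) : sparsity (x + y) ≤ sparsity x + sparsity y :=
  sparsity_le_add_of_ne_zero fun i hi => by
    by_contra! h
    simp [h.1, h.2] at hi

lemma sparsity_sub_le (x y : Fin d → ℝ) : sparsity (x - y) ≤ sparsity x + sparsity y :=
  sparsity_le_add_of_ne_zero fun i hi => by
    by_contra! h
    simp [h.1, h.2] at hi

lemma sparsity_smul_le (c : ℝ) (x : Fin d → ℝ) : sparsity (c • x) ≤ sparsity x :=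
  card_le_card fun i hi => by simp_all

end Sparsity

section RIP

variable {n d : ℕ}

lemma satRIP_one_add_sum_sq (Φ : Matrix (Fin n) (Fin d) ℝ) (t : ℕ) :
    satRIP Φ t (1 + ∑ i, ∑ j, Φ i j ^ 2) := fun x _ => by
  have hC : 0 ≤ ∑ i, ∑ j, Φ i j ^ 2 := by positivity
  have := nsq_mulVec_le Φ x
  have := nsq_nonneg x
  have := nsq_nonneg (Φ *ᵥ x)
  constructor <;> nlinarith

lemma isClosed_setOf_satRIP (Φ : Matrix (Fin n) (Fin d) ℝ) (t : ℕ) :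
    IsClosed {δ | satRIP Φ t δ} := by
  simp only [satRIP, Set.ofPred_forall, Set.ofPred_and]
  exact isClosed_iInter fun x => isClosed_iInter fun _ =>
    (isClosed_le (by fun_prop) continuous_const).inter (isClosed_le continuous_const (by fun_prop))

lemma ripConst_mem (Φ : Matrix (Fin n) (Fin d) ℝ) (t : ℕ) :
    ripConst Φ t ∈ {δ | 0 ≤ δ ∧ satRIP Φ t δ} :=
  (isClosed_Ici.inter (isClosed_setOf_satRIP Φ t)).csInf_mem
    ⟨_, Set.mem_Ici.2 (by positivity), satRIP_one_add_sum_sq Φ t⟩ ⟨0, fun _ h => h.1⟩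

/-- Polarization: `4 ⟪Φx, Φy⟫ = ‖Φ(x + y)‖² - ‖Φ(x - y)‖²`, and `x ⊥ y` gives
`‖x ± y‖² = ‖x‖² + ‖y‖²`. -/
lemma satRIP.dotProduct_mulVec_le_avg {Φ : Matrix (Fin n) (Fin d) ℝ} {t : ℕ} {δ : ℝ}
    (hΦ : satRIP Φ t δ) {x y : Fin d → ℝ} (hxy : x ⬝ᵥ y = 0) (ht : sparsity x + sparsity y ≤ t) :
    Φ *ᵥ x ⬝ᵥ Φ *ᵥ y ≤ δ * (nsq x + nsq y) / 2 := by
  have hadd := (hΦ (x + y) ((sparsity_add_le x y).trans ht)).2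
  have hsub := (hΦ (x - y) ((sparsity_sub_le x y).trans ht)).1
  simp only [nsq_eq_dotProduct, mulVec_add, mulVec_sub, add_dotProduct, dotProduct_add,
    sub_dotProduct, dotProduct_sub, dotProduct_comm y x, hxy, dotProduct_comm (Φ *ᵥ y)]
    at hadd hsub ⊢
  linarith

lemma satRIP.dotProduct_mulVec_le {Φ : Matrix (Fin n) (Fin d) ℝ} {t : ℕ} {δ : ℝ}
    (hΦ : satRIP Φ t δ) (hδ : 0 ≤ δ) {x y : Fin d → ℝ}
    (hxy : x ⬝ᵥ y = 0) (ht : sparsity x + sparsity y ≤ t) :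
    Φ *ᵥ x ⬝ᵥ Φ *ᵥ y ≤ δ * l2 x * l2 y := by
  rcases eq_or_ne x 0 with rfl | hx
  · simp only [mulVec_zero, zero_dotProduct]
    exact mul_nonneg (mul_nonneg hδ (l2_nonneg _)) (l2_nonneg _)
  rcases eq_or_ne y 0 with rfl | hy
  · simp only [mulVec_zero, dotProduct_zero]
    exact mul_nonneg (mul_nonneg hδ (l2_nonneg _)) (l2_nonneg _)
  -- rescaling to `‖y‖ x` and `‖x‖ y` turns the arithmetic mean into the geometric one
  have key := hΦ.dotProduct_mulVec_le_avg (x := l2 y • x) (y := l2 x • y)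
    (by simp only [smul_dotProduct, dotProduct_smul, hxy, smul_zero])
    ((add_le_add (sparsity_smul_le _ x) (sparsity_smul_le _ y)).trans ht)
  rw [mulVec_smul, mulVec_smul, smul_dotProduct, dotProduct_smul, nsq_smul, nsq_smul,
    ← sq_l2 x, ← sq_l2 y, smul_eq_mul, smul_eq_mul] at key
  refine le_of_mul_le_mul_left ?_ (mul_pos (l2_pos hx) (l2_pos hy))
  linarith

end RIP

section ExtendByZero

variable {ι : Type*} [Fintype ι] [DecidableEq ι] {s : Finset ι}

def extendByZero (s : Finset ι) (u : s → ℝ) : ι → ℝ :=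
  fun i => if h : i ∈ s then u ⟨i, h⟩ else 0

lemma extendByZero_dotProduct (u : s → ℝ) (v : ι → ℝ) :
    extendByZero s u ⬝ᵥ v = u ⬝ᵥ fun j => v j := by
  simp only [dotProduct, extendByZero, dite_mul, zero_mul]
  rw [← sum_subset (subset_univ s) fun i _ hi => dif_neg hi, sum_dite_of_true fun _ h => h]

lemma nsq_extendByZero (u : s → ℝ) : nsq (extendByZero s u) = nsq u := by
  rw [nsq_eq_dotProduct, extendByZero_dotProduct, nsq_eq_dotProduct]
  congr 1
  funext j
  simp [extendByZero]

lemma l2_extendByZero (u : s → ℝ) : l2 (extendByZero s u) = l2 u := by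
  rw [l2, l2, nsq_extendByZero]

lemma extendByZero_dotProduct_extendByZero {l : Finset ι} (h : Disjoint l s) (a : l → ℝ)
    (b : s → ℝ) : extendByZero l a ⬝ᵥ extendByZero s b = 0 := by
  have hb : (fun j : l => extendByZero s b j) = 0 :=
    funext fun j => dif_neg (disjoint_left.1 h j.2)
  rw [extendByZero_dotProduct, hb, dotProduct_zero]

end ExtendByZero

lemma sparsity_extendByZero_le {d : ℕ} (s : Finset (Fin d)) (u : s → ℝ) :
    sparsity (extendByZero s u) ≤ s.card :=
  card_le_card fun i hi => by
    by_contra h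
    simp [extendByZero, h] at hi

lemma mulVec_extendByZero {n d : ℕ} (Φ : Matrix (Fin n) (Fin d) ℝ) (s : Finset (Fin d))
    (u : s → ℝ) : Φ *ᵥ extendByZero s u = cols Φ s *ᵥ u := by
  funext k
  rw [mulVec, dotProduct_comm, extendByZero_dotProduct, mulVec, dotProduct_comm]
  rfl

theorem stmt1_general {n d : ℕ} (Φ : Matrix (Fin n) (Fin d) ℝ) (l s : Finset (Fin d))
    (hdisj : Disjoint l s) (b : {i // i ∈ s} → ℝ) :
    l2 (((cols Φ l)ᵀ * cols Φ s).mulVec b) ≤ ripConst Φ (l.card + s.card) * l2 b := by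
  obtain ⟨hδ, hΦ⟩ := ripConst_mem Φ (l.card + s.card)
  set a := ((cols Φ l)ᵀ * cols Φ s) *ᵥ b
  have key := hΦ.dotProduct_mulVec_le hδ (extendByZero_dotProduct_extendByZero hdisj a b)
    (add_le_add (sparsity_extendByZero_le l a) (sparsity_extendByZero_le s b))
  rw [mulVec_extendByZero, mulVec_extendByZero, l2_extendByZero, l2_extendByZero] at key
  have hself : cols Φ l *ᵥ a ⬝ᵥ cols Φ s *ᵥ b = l2 a ^ 2 := by
    rw [sq_l2, nsq_eq_dotProduct, ← vecMul_transpose, ← dotProduct_mulVec, mulVec_mulVec]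
  rw [hself] at key
  rcases (l2_nonneg a).eq_or_lt with h | h
  · rw [← h]
    exact mul_nonneg hδ (l2_nonneg b)
  · nlinarith

/-- for disjoint `l, s` and `δ_{|l|+|s|} < 1`, `‖Φ_lᵀ Φ_s b‖₂ ≤ δ ‖b‖₂`. -/
theorem stmt1 {n d : ℕ} (Φ : Matrix (Fin n) (Fin d) ℝ) (l s : Finset (Fin d))
    (hdisj : Disjoint l s) (hδ : ripConst Φ (l.card + s.card) < 1)
    (b : {i // i ∈ s} → ℝ) :
    l2 (((cols Φ l)ᵀ * cols Φ s).mulVec b) ≤ ripConst Φ (l.card + s.card) * l2 b :=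
  stmt1_general Φ l s hdisj b
end
end
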